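/- The function f(t) = (1/(2π²)) ∫₀^∞ p² (1/(|p²−1|+t) − 1/(p²+1+t)) dp is well-defined (the integral converges), positive, and strictly monotone decreasing for t > 0. -/

import Mathlib

open Real Set MeasureTheory

/-- `f(t) = (1/(2π²)) ∫₀^∞ p² (1/(|p²−1|+t) − 1/(p²+1+t)) dp`. -/
noncomputable def fInt (t : ℝ) : ℝ :=
  (1 / (2 * Real.pi ^ 2)) *
    ∫ p in Set.Ioi (0 : ℝ), p ^ 2 * (1 / (|p ^ 2 - 1| + t) - 1 / (p ^ 2 + 1 + t))

/-!
Writing `a = |p² - 1|` and `b = p² + 1`, the integrand is `p² (b - a) / ((a + t)(b + t))`.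
Since `0 ≤ a < b` for `p ≠ 0`, it is positive and strictly decreasing in `t`, so the integral
is positive and strictly decreasing as soon as it converges. Convergence holds because
`b - a ≤ 2` and `p² ≤ b + t` bound the integrand by `2 / (a + t)`, hence by a multiple of
`1 / (1 + p²)`.
-/

section MeasureTheory

variable {X : Type*} [MeasurableSpace X] {μ : Measure X} {s : Set X} {f g : X → ℝ}

theorem setIntegral_lt_setIntegral_of_forall_lt (hs : MeasurableSet s) (hμs : μ s ≠ 0)
    (hf : IntegrableOn f s μ) (hg : IntegrableOn g s μ) (hlt : ∀ x ∈ s, f x < g x) :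
    ∫ x in s, f x ∂μ < ∫ x in s, g x ∂μ := by
  rw [← sub_pos, ← integral_sub hg hf]
  have hnonneg : 0 ≤ᵐ[μ.restrict s] fun x => g x - f x :=
    ae_restrict_of_forall_mem hs fun x hx => (sub_pos.2 (hlt x hx)).le
  rw [setIntegral_pos_iff_support_of_nonneg_ae hnonneg (hg.sub hf),
    inter_eq_self_of_subset_right fun x hx => Function.mem_support.2 (sub_pos.2 (hlt x hx)).ne']
  exact pos_iff_ne_zero.2 hμs

theorem setIntegral_pos_of_forall_pos (hs : MeasurableSet s) (hμs : μ s ≠ 0)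
    (hf : IntegrableOn f s μ) (hpos : ∀ x ∈ s, 0 < f x) : 0 < ∫ x in s, f x ∂μ := by
  simpa using setIntegral_lt_setIntegral_of_forall_lt hs hμs integrableOn_zero hf hpos

end MeasureTheory

theorem one_div_add_sub_one_div_add {a b t : ℝ} (ha : a + t ≠ 0) (hb : b + t ≠ 0) :
    1 / (a + t) - 1 / (b + t) = (b - a) / ((a + t) * (b + t)) := by
  rw [one_div, one_div, inv_sub_inv ha hb, add_sub_add_right_eq_sub]

theorem one_div_add_sub_one_div_add_pos {a b t : ℝ} (ha : 0 < a + t) (hab : a < b) :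
    0 < 1 / (a + t) - 1 / (b + t) :=
  sub_pos.2 (one_div_lt_one_div_of_lt ha (by linarith))

theorem strictAntiOn_one_div_add_sub_one_div_add {a b : ℝ} (hab : a < b) :
    StrictAntiOn (fun t => 1 / (a + t) - 1 / (b + t)) (Ioi (-a)) := by
  intro s hs t ht hst
  rw [mem_Ioi] at hs ht
  have has : 0 < a + s := by linarith
  have hbs : 0 < b + s := by linarith
  dsimp only
  rw [one_div_add_sub_one_div_add has.ne' hbs.ne',
    one_div_add_sub_one_div_add (by linarith) (by linarith)]
  exact div_lt_div_of_pos_left (sub_pos.2 hab) (mul_pos has hbs)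
    (mul_lt_mul'' (by linarith) (by linarith) has.le hbs.le)

noncomputable def fIntegrand (t p : ℝ) : ℝ :=
  p ^ 2 * (1 / (|p ^ 2 - 1| + t) - 1 / (p ^ 2 + 1 + t))

theorem abs_sq_sub_one_lt_sq_add_one {p : ℝ} (hp : p ≠ 0) : |p ^ 2 - 1| < p ^ 2 + 1 := by
  have : 0 < p ^ 2 := by positivity
  exact abs_lt.2 ⟨by linarith, by linarith⟩

theorem abs_sq_sub_one_le_sq_add_one (p : ℝ) : |p ^ 2 - 1| ≤ p ^ 2 + 1 :=
  abs_le.2 ⟨by linarith [sq_nonneg p], by linarith⟩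

theorem fIntegrand_nonneg {t : ℝ} (ht : 0 < t) (p : ℝ) : 0 ≤ fIntegrand t p :=
  mul_nonneg (sq_nonneg p) (sub_nonneg.2 (one_div_le_one_div_of_le (by positivity)
    (by linarith [abs_sq_sub_one_le_sq_add_one p])))

theorem fIntegrand_pos {t p : ℝ} (ht : 0 < t) (hp : p ≠ 0) : 0 < fIntegrand t p :=
  mul_pos (by positivity)
    (one_div_add_sub_one_div_add_pos (by positivity) (abs_sq_sub_one_lt_sq_add_one hp))

theorem strictAntiOn_fIntegrand {p : ℝ} (hp : p ≠ 0) :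
    StrictAntiOn (fun t => fIntegrand t p) (Ioi 0) := by
  have hanti := (strictAntiOn_one_div_add_sub_one_div_add
    (abs_sq_sub_one_lt_sq_add_one hp)).mono (Ioi_subset_Ioi (neg_nonpos.2 (abs_nonneg _)))
  intro s hs t ht hst
  exact mul_lt_mul_of_pos_left (hanti hs ht hst) (by positivity)

theorem continuous_fIntegrand {t : ℝ} (ht : 0 < t) : Continuous (fIntegrand t) := by
  unfold fIntegrand
  have ha : ∀ p : ℝ, |p ^ 2 - 1| + t ≠ 0 := fun p => by positivity
  have hb : ∀ p : ℝ, p ^ 2 + 1 + t ≠ 0 := fun p => by positivity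
  fun_prop (disch := assumption)

theorem fIntegrand_le_two_div {t : ℝ} (ht : 0 < t) (p : ℝ) :
    fIntegrand t p ≤ 2 / (|p ^ 2 - 1| + t) := by
  have hlow : p ^ 2 - 1 ≤ |p ^ 2 - 1| := le_abs_self _
  have hup := abs_sq_sub_one_le_sq_add_one p
  have hat : 0 < |p ^ 2 - 1| + t := by positivity
  have hbt : 0 < p ^ 2 + 1 + t := by positivity
  rw [fIntegrand, one_div_add_sub_one_div_add hat.ne' hbt.ne', ← mul_div_assoc,
    div_le_div_iff₀ (by positivity) hat]
  have hp : p ^ 2 ≤ p ^ 2 + 1 + t := by linarith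
  nlinarith [mul_le_mul hp (show p ^ 2 + 1 - |p ^ 2 - 1| ≤ 2 by linarith)
    (by linarith) hbt.le]

theorem two_div_abs_sq_sub_one_add_le {t : ℝ} (ht : 0 < t) (p : ℝ) :
    2 / (|p ^ 2 - 1| + t) ≤ 2 * (1 + 2 / t) * (1 + p ^ 2)⁻¹ := by
  have hp : 1 + p ^ 2 ≤ |p ^ 2 - 1| + 2 := by linarith [le_abs_self (p ^ 2 - 1)]
  set a := |p ^ 2 - 1|
  have ha : 0 ≤ a := abs_nonneg _
  have key : 1 + p ^ 2 ≤ (1 + 2 / t) * (a + t) := by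
    have : (1 + 2 / t) * (a + t) = a + 2 + t + 2 * a / t := by field_simp; ring
    linarith [div_nonneg (mul_nonneg zero_le_two ha) ht.le]
  rw [← div_eq_mul_inv, div_le_div_iff₀ (by positivity) (by positivity)]
  nlinarith

theorem integrable_fIntegrand {t : ℝ} (ht : 0 < t) : Integrable (fIntegrand t) := by
  refine (integrable_inv_one_add_sq.const_mul (2 * (1 + 2 / t))).mono'
    (continuous_fIntegrand ht).aestronglyMeasurable (ae_of_all _ fun p => ?_)
  rw [norm_of_nonneg (fIntegrand_nonneg ht p)]
  exact (fIntegrand_le_two_div ht p).trans (two_div_abs_sq_sub_one_add_le ht p)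

theorem fInt_welldefined_pos_strictAnti :
    (∀ t : ℝ, 0 < t →
      IntegrableOn (fun p : ℝ => p ^ 2 * (1 / (|p ^ 2 - 1| + t) - 1 / (p ^ 2 + 1 + t)))
        (Set.Ioi 0) volume ∧ 0 < fInt t) ∧
    StrictAntiOn fInt (Set.Ioi 0) := by
  have hc : 0 < 1 / (2 * π ^ 2) := by positivity
  have hvol : volume (Ioi (0 : ℝ)) ≠ 0 := by simp
  have hint : ∀ {t : ℝ}, 0 < t → IntegrableOn (fIntegrand t) (Ioi 0) :=
    fun ht => (integrable_fIntegrand ht).integrableOn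
  refine ⟨fun t ht => ⟨hint ht, ?_⟩, fun s hs t ht hst => ?_⟩
  · exact mul_pos hc (setIntegral_pos_of_forall_pos measurableSet_Ioi hvol (hint ht)
      fun p hp => fIntegrand_pos ht (ne_of_gt hp))
  · exact mul_lt_mul_of_pos_left (setIntegral_lt_setIntegral_of_forall_lt measurableSet_Ioi hvol
      (hint ht) (hint hs) fun p hp => strictAntiOn_fIntegrand (ne_of_gt hp) hs ht hst) hc
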